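/- arXiv:1111.6845 — 3 statements merged into one kernel-verified Lean document; each statement's English description precedes it below -/
import Mathlib

section
/- Let G = (V,E) be a finite simple graph on p vertices, σ an ordering of V. Suppose that for every p×p diagonal matrix D with positive diagonal entries and every p×p lower triangular matrix L with unit diagonal, the following equivalences hold: L ∈ 𝓛_{G_σ} ⇔ L⁻¹ ∈ 𝓛_{G_σ} ⇔ LDLᵀ ∈ P_{G_σ}. Then G is a homogeneous graph and σ is a Hasse tree based elimination scheme for G. -/
open Matrix BigOperators

/-- The closed neighborhood `N[v]` of a vertex `v`. -/
def cNbhd {V : Type*} (G : SimpleGraph V) (v : V) : Set V :=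
  {u | u = v ∨ G.Adj u v}

/-- A graph is homogeneous (co-chordal) if for every edge `(v,v')`, the closed
neighborhoods are nested. -/
def Homogeneous {V : Type*} (G : SimpleGraph V) : Prop :=
  ∀ v v' : V, G.Adj v v' → cNbhd G v' ⊆ cNbhd G v ∨ cNbhd G v ⊆ cNbhd G v'

/-- `σ` is a Hasse tree based elimination scheme: whenever `u → v`
(`N[v] ⊆ N[u]`) and `N[u] ≠ N[v]`, one has `σ(u) > σ(v)`. -/
def HasseElimScheme {V : Type*} {p : ℕ} (G : SimpleGraph V) (σ : V ≃ Fin p) : Prop :=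
  ∀ u v : V, cNbhd G v ⊆ cNbhd G u → cNbhd G u ≠ cNbhd G v → σ v < σ u

/-- `σ` is a perfect vertex elimination scheme for `G`. -/
def PerfectElimScheme {V : Type*} {p : ℕ} (G : SimpleGraph V) (σ : V ≃ Fin p) : Prop :=
  ∀ i j k : Fin p, i < j → j < k →
    G.Adj (σ.symm j) (σ.symm i) → G.Adj (σ.symm k) (σ.symm i) →
      G.Adj (σ.symm k) (σ.symm j)

/-- `G` has an induced cycle on at least `4` vertices. -/
def HasInducedCycleGE4 {V : Type*} (G : SimpleGraph V) : Prop :=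
  ∃ (n : ℕ) (f : Fin n → V), 4 ≤ n ∧ Function.Injective f ∧
    ∀ i j : Fin n, G.Adj (f i) (f j) ↔
      (((i : ℕ) + 1) % n = (j : ℕ) ∨ ((j : ℕ) + 1) % n = (i : ℕ))

/-- A graph is decomposable (chordal) if it has no induced cycle of length `≥ 4`. -/
def Decomposable {V : Type*} (G : SimpleGraph V) : Prop := ¬ HasInducedCycleGE4 G

/-- `G` has an induced path on `4` vertices. -/
def HasInducedPath4 {V : Type*} (G : SimpleGraph V) : Prop :=
  ∃ a b c d : V, a ≠ b ∧ a ≠ c ∧ a ≠ d ∧ b ≠ c ∧ b ≠ d ∧ c ≠ d ∧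
    G.Adj a b ∧ G.Adj b c ∧ G.Adj c d ∧ ¬ G.Adj a c ∧ ¬ G.Adj a d ∧ ¬ G.Adj b d

/-- `G` has an induced cycle on `4` vertices. -/
def HasInducedCycle4 {V : Type*} (G : SimpleGraph V) : Prop :=
  ∃ a b c d : V, a ≠ b ∧ a ≠ c ∧ a ≠ d ∧ b ≠ c ∧ b ≠ d ∧ c ≠ d ∧
    G.Adj a b ∧ G.Adj b c ∧ G.Adj c d ∧ G.Adj d a ∧ ¬ G.Adj a c ∧ ¬ G.Adj b d

/-- `C` is a maximal clique of `G`. -/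
def IsMaxClique {V : Type*} (G : SimpleGraph V) (C : Finset V) : Prop :=
  G.IsClique (C : Set V) ∧
    ∀ C' : Finset V, G.IsClique (C' : Set V) → C ⊆ C' → C = C'

/-- Membership in the class `𝓛_{G_σ}`: unit diagonal, and `L i j = 0` whenever
`i < j` or the corresponding vertices are not adjacent. -/
def memL {V : Type*} {p : ℕ} (G : SimpleGraph V) (σ : V ≃ Fin p)
    (L : Matrix (Fin p) (Fin p) ℝ) : Prop :=
  (∀ i, L i i = 1) ∧
    ∀ i j : Fin p, i ≠ j → (i < j ∨ ¬ G.Adj (σ.symm i) (σ.symm j)) → L i j = 0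

/-- Membership in the class `P_{G_σ}`: positive definite, with `A i j = 0` whenever
the corresponding vertices are distinct and not adjacent. -/
def memP {V : Type*} {p : ℕ} (G : SimpleGraph V) (σ : V ≃ Fin p)
    (A : Matrix (Fin p) (Fin p) ℝ) : Prop :=
  A.PosDef ∧ ∀ i j : Fin p, i ≠ j → ¬ G.Adj (σ.symm i) (σ.symm j) → A i j = 0

/-- Lower triangular with unit diagonal. -/
def LowerUnitri {p : ℕ} (L : Matrix (Fin p) (Fin p) ℝ) : Prop :=
  (∀ i, L i i = 1) ∧ ∀ i j : Fin p, i < j → L i j = 0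

/-- Diagonal matrix with positive diagonal entries. -/
def PosDiag {p : ℕ} (D : Matrix (Fin p) (Fin p) ℝ) : Prop :=
  (∀ i j : Fin p, i ≠ j → D i j = 0) ∧ ∀ i, 0 < D i i

/-- Determinant of the principal submatrix of `A` with rows and columns in `S`. -/
noncomputable def principalDet {p : ℕ} (A : Matrix (Fin p) (Fin p) ℝ)
    (S : Finset (Fin p)) : ℝ :=
  (A.submatrix (fun x : S => (x : Fin p)) (fun x : S => (x : Fin p))).det

/-!
With `D = 1` and `L = 1 + E_{ab} + E_{cd}` for two edges `(a, b)`, `(c, d)` of `G_σ` below the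
diagonal (so `L ∈ 𝓛_{G_σ}`), the hypothesis forces the following for positions `i < j < k` with
`j ~ i`: the `(k, j)` entry of `L Lᵀ` for `L = 1 + E_{ji} + E_{ki}` and the `(k, i)` entry of
`L⁻¹` for `L = 1 + E_{ji} + E_{kj}` are `1`, so `k ~ i` iff `k ~ j`. Hence if `v ~ v'` and
`σ v < σ v'`, every neighbour of `v` is one of `v'`, i.e. `N[v] ⊆ N[v']`; this gives both
homogeneity and the ordering condition.
-/

section
variable {V : Type*} {p : ℕ} {G : SimpleGraph V} {σ : V ≃ Fin p}

theorem posDiag_one : PosDiag (1 : Matrix (Fin p) (Fin p) ℝ) :=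
  ⟨fun _ _ h => one_apply_ne h, fun _ => by simp⟩

theorem lowerUnitri_and_memL_of_support {L : Matrix (Fin p) (Fin p) ℝ} (hdiag : ∀ a, L a a = 1)
    (hsupp : ∀ a b, a ≠ b → L a b ≠ 0 → b < a ∧ G.Adj (σ.symm a) (σ.symm b)) :
    LowerUnitri L ∧ memL G σ L := by
  refine ⟨⟨hdiag, fun a b hab => ?_⟩, hdiag, fun a b hab hzero => ?_⟩ <;> by_contra h
  · exact (hsupp a b hab.ne h).1.asymm hab
  · obtain ⟨hba, hadj⟩ := hsupp a b hab h
    exact hzero.elim hba.asymm (· hadj)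

theorem lowerUnitri_and_memL_one_add_single_add_single {a b c d : Fin p} (hba : b < a)
    (hdc : d < c) (hab : G.Adj (σ.symm a) (σ.symm b)) (hcd : G.Adj (σ.symm c) (σ.symm d)) :
    LowerUnitri (1 + single a b 1 + single c d 1 : Matrix (Fin p) (Fin p) ℝ) ∧
      memL G σ (1 + single a b 1 + single c d 1 : Matrix (Fin p) (Fin p) ℝ) := by
  refine lowerUnitri_and_memL_of_support (fun x => ?_) (fun x y hxy h => ?_)
  · simp only [Matrix.add_apply, one_apply, single_apply]
    split_ifs <;> grind
  · simp only [Matrix.add_apply, one_apply, single_apply] at h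
    split_ifs at h <;> grind

theorem perfectElimScheme_of_memP
    (hP : ∀ L : Matrix (Fin p) (Fin p) ℝ, LowerUnitri L → memL G σ L →
      memP G σ (L * Lᵀ)) :
    PerfectElimScheme G σ := by
  intro i j k hij hjk hji hki
  by_contra hkj
  have hik : i < k := hij.trans hjk
  set L : Matrix (Fin p) (Fin p) ℝ := 1 + single j i 1 + single k i 1 with hL
  obtain ⟨hLU, hLmem⟩ := lowerUnitri_and_memL_one_add_single_add_single hij hik hji hki
  have hzero : (L * Lᵀ) k j = 0 := (hP L hLU hLmem).2 k j hjk.ne' hkj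
  have hone : (L * Lᵀ) k j = 1 := by
    simp [hL, mul_apply, single_apply, one_apply, mul_add, Finset.sum_add_distrib, hij.ne,
      hjk.ne, hjk.ne', hik.ne']
  exact one_ne_zero (hone.symm.trans hzero)

theorem adj_trans_of_memL_inv
    (hinv : ∀ L : Matrix (Fin p) (Fin p) ℝ, LowerUnitri L → memL G σ L →
      memL G σ L⁻¹)
    {i j k : Fin p} (hij : i < j) (hjk : j < k)
    (hji : G.Adj (σ.symm j) (σ.symm i)) (hkj : G.Adj (σ.symm k) (σ.symm j)) :
    G.Adj (σ.symm k) (σ.symm i) := by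
  by_contra hki
  have hik : i < k := hij.trans hjk
  set L : Matrix (Fin p) (Fin p) ℝ := 1 + single j i 1 + single k j 1 with hL
  set M : Matrix (Fin p) (Fin p) ℝ := 1 - single j i 1 - single k j 1 + single k i 1 with hM
  obtain ⟨hLU, hLmem⟩ := lowerUnitri_and_memL_one_add_single_add_single hij hjk hji hkj
  have hLM : L * M = 1 := by
    simp only [hL, hM, add_mul, mul_add, mul_sub, one_mul, mul_one, single_mul_single_same,
      single_mul_single_of_ne (h := hij.ne) .., single_mul_single_of_ne (h := hjk.ne) ..,
      single_mul_single_of_ne (h := hik.ne) ..]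
    abel
  have hzero : M k i = 0 := by
    rw [← inv_eq_right_inv hLM]
    exact (hinv L hLU hLmem).2 k i hik.ne' (Or.inr hki)
  have hone : M k i = 1 := by
    simp [hM, one_apply, hij.ne', hjk.ne, hik.ne']
  exact one_ne_zero (hone.symm.trans hzero)

theorem cNbhd_subset_of_adj_of_lt (hpe : PerfectElimScheme G σ)
    (htrans : ∀ i j k : Fin p, i < j → j < k → G.Adj (σ.symm j) (σ.symm i) →
      G.Adj (σ.symm k) (σ.symm j) → G.Adj (σ.symm k) (σ.symm i))
    {v v' : V} (hadj : G.Adj v v') (hlt : σ v < σ v') :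
    cNbhd G v ⊆ cNbhd G v' := by
  rintro a (rfl | hav)
  · exact Or.inr hadj
  rcases eq_or_ne a v' with rfl | hav'
  · exact Or.inl rfl
  right
  rcases lt_trichotomy (σ a) (σ v) with h | h | h
  · simpa using (htrans _ _ _ h hlt (by simpa using hav.symm) (by simpa using hadj.symm)).symm
  · exact absurd (σ.injective h) hav.ne
  rcases lt_trichotomy (σ a) (σ v') with h' | h' | h'
  · simpa using (hpe _ _ _ h h' (by simpa using hav) (by simpa using hadj.symm)).symm
  · exact absurd (σ.injective h') hav'
  · simpa using hpe _ _ _ hlt h' (by simpa using hadj.symm) (by simpa using hav)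

theorem homogeneous_of_cNbhd_subset
    (hsub : ∀ v v', G.Adj v v' → σ v < σ v' → cNbhd G v ⊆ cNbhd G v') :
    Homogeneous G := by
  intro v v' hadj
  rcases lt_trichotomy (σ v) (σ v') with h | h | h
  · exact Or.inr (hsub _ _ hadj h)
  · exact absurd (σ.injective h) hadj.ne
  · exact Or.inl (hsub _ _ hadj.symm h)

theorem hasseElimScheme_of_cNbhd_subset
    (hsub : ∀ v v', G.Adj v v' → σ v < σ v' → cNbhd G v ⊆ cNbhd G v') :
    HasseElimScheme G σ := by
  intro u v hvu hne
  by_contra! hle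
  obtain rfl | hadj : v = u ∨ G.Adj v u := hvu (Or.inl rfl)
  · exact hne rfl
  rcases hle.lt_or_eq with hlt | heq
  · exact hne ((hsub _ _ hadj.symm hlt).antisymm hvu)
  · exact hadj.ne (σ.injective heq).symm

end

theorem statement7_general {V : Type*} {p : ℕ} (G : SimpleGraph V) (σ : V ≃ Fin p)
    (H : ∀ D : Matrix (Fin p) (Fin p) ℝ, PosDiag D →
      ∀ L : Matrix (Fin p) (Fin p) ℝ, LowerUnitri L →
        ((memL G σ L ↔ memL G σ L⁻¹) ∧ (memL G σ L ↔ memP G σ (L * D * Lᵀ)))) :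
    Homogeneous G ∧ HasseElimScheme G σ := by
  have hpe : PerfectElimScheme G σ := perfectElimScheme_of_memP fun L hLU hL => by
    simpa using (H 1 posDiag_one L hLU).2.mp hL
  have htrans := fun i j k => adj_trans_of_memL_inv (i := i) (j := j) (k := k)
    fun L hLU => (H 1 posDiag_one L hLU).1.mp
  have hsub := fun v v' => cNbhd_subset_of_adj_of_lt (v := v) (v' := v') hpe htrans
  exact ⟨homogeneous_of_cNbhd_subset hsub, hasseElimScheme_of_cNbhd_subset hsub⟩

/-- Converse: if for all positive diagonal `D` and unit lower triangular `L` the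
equivalences `L ∈ 𝓛_{G_σ} ⇔ L⁻¹ ∈ 𝓛_{G_σ} ⇔ LDLᵀ ∈ P_{G_σ}` hold, then `G` is
homogeneous and `σ` is a Hasse tree based elimination scheme. -/
theorem statement7 {V : Type*} [Fintype V] {p : ℕ} (G : SimpleGraph V) (σ : V ≃ Fin p)
    (H : ∀ D : Matrix (Fin p) (Fin p) ℝ, PosDiag D →
      ∀ L : Matrix (Fin p) (Fin p) ℝ, LowerUnitri L →
        ((memL G σ L ↔ memL G σ L⁻¹) ∧ (memL G σ L ↔ memP G σ (L * D * Lᵀ)))) :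
    Homogeneous G ∧ HasseElimScheme G σ :=
  statement7_general G σ H
end

section
/- Let G = (V,E) be a homogeneous graph on p vertices, and σ an ordering of V which is a Hasse tree based elimination scheme for G. Let Σ ∈ P_{G_σ}, and let Σ = LDLᵀ denote its modified Cholesky decomposition. Then for any maximal clique C of G, det((Σ⁻¹)_{σ(C)}) = ∏_{i ∈ σ(C)} 1/D_{ii}, where (Σ⁻¹)_{σ(C)} denotes the principal submatrix of Σ⁻¹ with rows and columns indexed by σ(C) = {σ(v) : v ∈ C}. -/
/-!
A Hasse tree based elimination scheme of a homogeneous graph is a perfect elimination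
order, so the Cholesky factor `L` has no fill-in: `L i j ≠ 0` with `j < i` forces the
corresponding vertices to be adjacent, and then `N[v_j] ⊆ N[v_i]`. No vertex outside a
maximal clique `C` can contain the closed neighbourhood of a vertex of `C`, so `L`, and
with it `L⁻¹`, vanishes on rows outside `σ(C)` and columns inside `σ(C)`. Hence
`(Σ⁻¹)_{σ(C)} = (L⁻¹)_{σ(C)}ᵀ D⁻¹_{σ(C)} (L⁻¹)_{σ(C)}`, and the unit triangular factor has
determinant one.
-/

open Matrix BigOperators

namespace Matrix

variable {n R : Type*}

/-- `Prop` is ordered by `False < True`. -/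
theorem blockTriangular_notMem_iff [Zero R] (M : Matrix n n R) (T : Finset n) :
    M.BlockTriangular (· ∉ T) ↔ ∀ i ∉ T, ∀ j ∈ T, M i j = 0 := by
  simp only [BlockTriangular, lt_iff_le_not_ge, le_Prop_eq, Classical.not_imp]
  exact ⟨fun h i hi j hj => h ⟨fun _ => hi, hi, not_not.2 hj⟩,
    fun h i j ⟨_, hi, hj⟩ => h i hi j (not_not.1 hj)⟩

theorem mul_diagonal_mul_transpose_apply [Fintype n] [DecidableEq n] [CommSemiring R]
    (L : Matrix n n R) (d : n → R) (i j : n) :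
    (L * diagonal d * Lᵀ) i j = ∑ k, L i k * d k * L j k := by
  rw [mul_apply]
  simp only [mul_diagonal, transpose_apply]

theorem submatrix_mul_of_eq_zero [Fintype n] [NonUnitalNonAssocSemiring R] (N M : Matrix n n R)
    (T : Finset n) (hM : ∀ k ∉ T, ∀ j ∈ T, M k j = 0) :
    ((N * M).submatrix (↑) (↑) : Matrix T T R) =
      (N.submatrix (↑) (↑) : Matrix T T R) * (M.submatrix (↑) (↑) : Matrix T T R) := by
  ext a b
  simp only [submatrix_apply, mul_apply]
  rw [Finset.sum_coe_sort T fun k => N a k * M k b]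
  exact (Finset.sum_subset (Finset.subset_univ T)
    fun k _ hk => by rw [hM k hk b b.2, mul_zero]).symm

theorem IsLowerTriangular.det_submatrix_eq_one {m : Type*} [Fintype m] [DecidableEq m]
    [LinearOrder m] [LinearOrder n] [CommRing R] {L : Matrix n n R} (hL : L.IsLowerTriangular)
    (hdiag : ∀ i, L i i = 1) {f : m → n} (hf : StrictMono f) :
    (L.submatrix f f).det = 1 := by
  rw [det_of_isLowerTriangular (L.submatrix f f) fun i j hij => hL (hf hij)]
  simp [hdiag]

theorem det_submatrix_inv_mul_diagonal_mul_transpose [Fintype n] [DecidableEq n]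
    [LinearOrder n] {K : Type*} [Field K] {L : Matrix n n K} (hL : L.IsLowerTriangular)
    (hdiag : ∀ i, L i i = 1) {d : n → K} (hd : ∀ i, d i ≠ 0) (T : Finset n)
    (hLT : ∀ i ∉ T, ∀ j ∈ T, L i j = 0) :
    ((L * diagonal d * Lᵀ)⁻¹.submatrix (↑) (↑) : Matrix T T K).det = ∏ i ∈ T, (d i)⁻¹ := by
  have hdetL : L.det = 1 := by
    rw [det_of_isLowerTriangular L hL]
    simp [hdiag]
  have hunit : IsUnit L.det := by simp [hdetL]
  let _ := L.invertibleOfIsUnitDet hunit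
  have hMT : ∀ i ∉ T, ∀ j ∈ T, L⁻¹ i j = 0 :=
    (blockTriangular_notMem_iff _ T).1 <|
      blockTriangular_inv_of_blockTriangular ((blockTriangular_notMem_iff L T).2 hLT)
  have hdetM : (L⁻¹.submatrix (↑) (↑) : Matrix T T K).det = 1 := by
    have h := congrArg det (submatrix_mul_of_eq_zero L L⁻¹ T hMT)
    rwa [mul_nonsing_inv L hunit, submatrix_one _ Subtype.val_injective, det_one, det_mul,
      hL.det_submatrix_eq_one hdiag (Subtype.strictMono_coe _), one_mul, eq_comm] at h
  have hAinv : (L * diagonal d * Lᵀ)⁻¹ = L⁻¹ᵀ * diagonal (Ring.inverse d) * L⁻¹ := by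
    rw [mul_inv_rev, mul_inv_rev, inv_diagonal, ← transpose_nonsing_inv, ← mul_assoc]
  have hDT : ∀ k ∉ T, ∀ j ∈ T, diagonal (Ring.inverse d) k j = 0 := fun k hk j hj =>
    diagonal_apply_ne _ fun h => hk (h ▸ hj)
  have hinv : ∀ i, Ring.inverse d i = (d i)⁻¹ := fun i => eq_inv_of_mul_eq_one_left <|
    congrFun (Ring.inverse_mul_cancel d (Pi.isUnit_iff.2 fun i => (hd i).isUnit)) i
  rw [hAinv, submatrix_mul_of_eq_zero _ _ T hMT, submatrix_mul_of_eq_zero _ _ T hDT, det_mul,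
    det_mul, ← transpose_submatrix, det_transpose, hdetM,
    submatrix_diagonal _ _ Subtype.val_injective, det_diagonal, mul_one, one_mul]
  simp only [Function.comp_apply, hinv]
  exact Finset.prod_coe_sort T fun i => (d i)⁻¹

end Matrix

section Graph

variable {V : Type*} {p : ℕ} {G : SimpleGraph V} {σ : V ≃ Fin p}

theorem cNbhd_subset_of_adj (hhom : Homogeneous G) (hσ : HasseElimScheme G σ) {u v : V}
    (hadj : G.Adj u v) (hlt : σ v < σ u) : cNbhd G v ⊆ cNbhd G u := by
  rcases hhom u v hadj with h | h
  · exact h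
  · by_cases heq : cNbhd G v = cNbhd G u
    · exact heq.le
    · exact absurd (hσ v u h heq) hlt.asymm

theorem HasseElimScheme.perfectElimScheme (hhom : Homogeneous G) (hσ : HasseElimScheme G σ) :
    PerfectElimScheme G σ := by
  intro i j k hij hjk hji hki
  have hsub := cNbhd_subset_of_adj hhom hσ hji (by simpa using hij)
  rcases hsub (Or.inr hki : σ.symm k ∈ cNbhd G (σ.symm i)) with h | h
  · exact absurd (σ.symm.injective h) hjk.ne'
  · exact h

theorem IsMaxClique.not_cNbhd_subset {C : Finset V} (hC : IsMaxClique G C) {u v : V}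
    (hv : v ∈ C) (hu : u ∉ C) : ¬ cNbhd G v ⊆ cNbhd G u := by
  classical
  intro hsub
  have hclique : G.IsClique ((insert u C : Finset V) : Set V) := by
    rw [Finset.coe_insert]
    refine hC.1.insert fun w hw hne => ?_
    have hw' : w ∈ cNbhd G v := (eq_or_ne w v).imp id fun h => hC.1 hw hv h
    exact ((hsub hw').resolve_left hne.symm).symm
  exact hu (hC.2 _ hclique (Finset.subset_insert u C) ▸ Finset.mem_insert_self u C)

theorem PerfectElimScheme.memL_of_eq_mul_diagonal_mul_transpose (hpes : PerfectElimScheme G σ)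
    {A L : Matrix (Fin p) (Fin p) ℝ} {d : Fin p → ℝ}
    (hA : ∀ i j, i ≠ j → ¬ G.Adj (σ.symm i) (σ.symm j) → A i j = 0) (hL : LowerUnitri L)
    (hd : ∀ i, d i ≠ 0) (hdec : A = L * diagonal d * Lᵀ) : memL G σ L := by
  suffices h : ∀ j i, j < i → ¬ G.Adj (σ.symm i) (σ.symm j) → L i j = 0 by
    refine ⟨hL.1, fun i j hne hij => ?_⟩
    rcases hne.lt_or_gt with hlt | hgt
    · exact hL.2 i j hlt
    · exact h j i hgt (hij.resolve_left hgt.asymm)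
  intro j
  induction j using WellFoundedLT.induction with
  | _ j ih =>
  intro i hji hnadj
  have hentry : A i j = L i j * d j := by
    rw [hdec, mul_diagonal_mul_transpose_apply, Finset.sum_eq_single j]
    · rw [hL.1 j, mul_one]
    · intro k _ hkj
      rcases hkj.lt_or_gt with hkj | hjk
      · by_contra hne
        simp only [← ne_eq, mul_ne_zero_iff] at hne
        have hik := not_imp_comm.1 (ih k hkj i (hkj.trans hji)) hne.1.1
        have hjk := not_imp_comm.1 (ih k hkj j hkj) hne.2
        exact hnadj (hpes k j i hkj hji hjk hik)
      · rw [hL.2 j k hjk, mul_zero]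
    · simp
  have hzero : L i j * d j = 0 := hentry ▸ hA i j hji.ne' hnadj
  exact (mul_eq_zero.1 hzero).resolve_right (hd j)

theorem memL.eq_zero_of_isMaxClique (hhom : Homogeneous G) (hσ : HasseElimScheme G σ)
    {L : Matrix (Fin p) (Fin p) ℝ} (hL : memL G σ L) {C : Finset V} (hC : IsMaxClique G C)
    {i j : Fin p} (hi : σ.symm i ∉ C) (hj : σ.symm j ∈ C) : L i j = 0 := by
  have hne : i ≠ j := by rintro rfl; exact hi hj
  refine hL.2 i j hne (hne.lt_or_gt.imp_right fun hji hadj => ?_)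
  exact hC.not_cNbhd_subset hj hi (cNbhd_subset_of_adj hhom hσ hadj (by simpa using hji))

end Graph

theorem statement8_general {V : Type*} {p : ℕ} (G : SimpleGraph V) (σ : V ≃ Fin p)
    (hhom : Homogeneous G) (hσ : HasseElimScheme G σ)
    (A L D : Matrix (Fin p) (Fin p) ℝ)
    (hA : memP G σ A) (hL : LowerUnitri L) (hD : PosDiag D)
    (hdec : A = L * D * Lᵀ)
    (C : Finset V) (hC : IsMaxClique G C) :
    principalDet A⁻¹ (C.image (fun v => σ v)) =
      ∏ i ∈ C.image (fun v => σ v), 1 / D i i := by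
  have hDdiag : D = diagonal D.diag := (IsDiag.diagonal_diag fun i j h => hD.1 i j h).symm
  have hd : ∀ i, D.diag i ≠ 0 := fun i => (hD.2 i).ne'
  rw [hDdiag] at hdec
  have hLmem : memL G σ L :=
    (hσ.perfectElimScheme hhom).memL_of_eq_mul_diagonal_mul_transpose hA.2 hL hd hdec
  have hmem : ∀ i, i ∈ C.image (fun v => σ v) ↔ σ.symm i ∈ C := fun i => by
    simp only [Finset.mem_image]
    exact ⟨by rintro ⟨v, hv, rfl⟩; simpa using hv, fun h => ⟨_, h, σ.apply_symm_apply i⟩⟩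
  rw [principalDet, hdec, det_submatrix_inv_mul_diagonal_mul_transpose (fun i j h => hL.2 i j h)
    hL.1 hd _ fun i hi j hj => hLmem.eq_zero_of_isMaxClique hhom hσ hC ((hmem i).not.1 hi)
      ((hmem j).1 hj)]
  simp [one_div]

/-- For a homogeneous graph with a Hasse tree based elimination scheme and
`Σ ∈ P_{G_σ}` with modified Cholesky decomposition `Σ = LDLᵀ`, for every maximal
clique `C`, `det((Σ⁻¹)_{σ(C)}) = ∏_{i ∈ σ(C)} 1 / D_{ii}`. -/
theorem statement8 {V : Type*} [Fintype V] {p : ℕ} (G : SimpleGraph V) (σ : V ≃ Fin p)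
    (hhom : Homogeneous G) (hσ : HasseElimScheme G σ)
    (A L D : Matrix (Fin p) (Fin p) ℝ)
    (hA : memP G σ A) (hL : LowerUnitri L) (hD : PosDiag D)
    (hdec : A = L * D * Lᵀ)
    (C : Finset V) (hC : IsMaxClique G C) :
    principalDet A⁻¹ (C.image (fun v => σ v)) =
      ∏ i ∈ C.image (fun v => σ v), 1 / D i i :=
  statement8_general G σ hhom hσ A L D hA hL hD hdec C hC
end

section
/- Let G = (V,E) be a homogeneous graph on p vertices, σ a Hasse tree based elimination scheme for G, and C a maximal clique of G. Let Σ ∈ P_{G_σ} with modified Cholesky decomposition Σ = LDLᵀ. Then for every vertex w ∉ C and every vertex u ∈ C, (L⁻¹)_{σ(w) σ(u)} = 0. -/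
open Matrix BigOperators

/-!
Homogeneity and the Hasse ordering together say that along every edge the closed neighbourhood
of the earlier vertex lies inside that of the later one. This makes `σ` a perfect elimination
ordering, so the factor `L` of `Σ = LDLᵀ` has no fill-in, i.e. `L ∈ 𝓛_{G_σ}`; and since a path
`j < k < i` of edges then closes up to an edge `j i`, the triangular system `L L⁻¹ = 1` shows
`L⁻¹ ∈ 𝓛_{G_σ}` as well. Finally a vertex `w ∉ C` misses some vertex of the maximal clique `C`,
so for `u ∈ C` the inclusion `N[u] ⊆ N[w]` fails, which rules out an edge `w u` with `σ u < σ w`.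
-/

def NestedElimScheme {V : Type*} {p : ℕ} (G : SimpleGraph V) (σ : V ≃ Fin p) : Prop :=
  ∀ u v : V, G.Adj u v → σ v < σ u → cNbhd G v ⊆ cNbhd G u

section Graph

variable {V : Type*} {p : ℕ} {G : SimpleGraph V} {σ : V ≃ Fin p}

theorem HasseElimScheme.nestedElimScheme (hσ : HasseElimScheme G σ) (hhom : Homogeneous G) :
    NestedElimScheme G σ := by
  intro u v huv hlt
  rcases hhom u v huv with hvu | huv
  · exact hvu
  · by_cases heq : cNbhd G v = cNbhd G u
    · exact heq.le
    · exact absurd (hσ v u huv heq) hlt.not_gt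

theorem NestedElimScheme.perfectElimScheme (hnest : NestedElimScheme G σ) :
    PerfectElimScheme G σ := by
  intro i j k hij hjk hji hki
  have hj : σ.symm j ∈ cNbhd G (σ.symm i) := Or.inr hji
  rcases hnest _ _ hki (by simpa using hij.trans hjk) hj with h | h
  · exact absurd (σ.symm.injective h) hjk.ne
  · exact h.symm

theorem exists_mem_not_mem_cNbhd_of_isMaxClique {C : Finset V} (hC : IsMaxClique G C) {w : V}
    (hw : w ∉ C) : ∃ x ∈ C, x ∉ cNbhd G w := by
  classical
  by_contra! h
  have hclique : G.IsClique (insert w C : Finset V) := by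
    rw [Finset.coe_insert]
    exact hC.1.insert fun x hx hwx => ((h x hx).resolve_left hwx.symm).symm
  exact hw (hC.2 _ hclique (Finset.subset_insert w C) ▸ Finset.mem_insert_self w C)

theorem NestedElimScheme.not_adj_of_isMaxClique (hnest : NestedElimScheme G σ) {C : Finset V}
    (hC : IsMaxClique G C) {w u : V} (hw : w ∉ C) (hu : u ∈ C) (hlt : σ u < σ w) :
    ¬ G.Adj w u := by
  intro hwu
  obtain ⟨x, hxC, hxw⟩ := exists_mem_not_mem_cNbhd_of_isMaxClique hC hw
  refine hxw (hnest w u hwu hlt ?_)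
  by_cases hxu : x = u
  · exact Or.inl hxu
  · exact Or.inr (hC.1 hxC hu hxu)

end Graph

section Triangular

variable {p : ℕ} {L : Matrix (Fin p) (Fin p) ℝ}

theorem LowerUnitri.det_eq_one (hL : LowerUnitri L) : L.det = 1 := by
  rw [det_of_isLowerTriangular L fun i j h => hL.2 i j h]
  simp [hL.1]

theorem LowerUnitri.inv (hL : LowerUnitri L) : LowerUnitri L⁻¹ := by
  have hinv : L⁻¹.IsLowerTriangular := by
    let _ := L.invertibleOfIsUnitDet (by simp [hL.det_eq_one])
    exact blockTriangular_inv_of_blockTriangular fun i j h => hL.2 i j h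
  refine ⟨fun i => ?_, fun i j h => hinv h⟩
  have hii := congr_fun (congr_fun (L.mul_nonsing_inv (by simp [hL.det_eq_one])) i) i
  rw [mul_apply, Finset.sum_eq_single i] at hii
  · simpa [hL.1 i] using hii
  · intro k _ hki
    rcases lt_or_gt_of_ne hki with hk | hk
    · rw [hinv hk, mul_zero]
    · rw [hL.2 i k hk, zero_mul]
  · simp

variable {V : Type*} {G : SimpleGraph V} {σ : V ≃ Fin p}

theorem memL.lowerUnitri (hL : memL G σ L) : LowerUnitri L :=
  ⟨hL.1, fun i j h => hL.2 i j h.ne (Or.inl h)⟩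

theorem LowerUnitri.memL (hL : LowerUnitri L)
    (h : ∀ i j, j < i → ¬ G.Adj (σ.symm i) (σ.symm j) → L i j = 0) : memL G σ L := by
  refine ⟨hL.1, fun i j hne hij => ?_⟩
  rcases lt_or_gt_of_ne hne with hlt | hlt
  · exact hL.2 i j hlt
  · exact h i j hlt (hij.resolve_left hlt.not_gt)

theorem memL_of_mul_diagonal_mul_transpose (hpeo : PerfectElimScheme G σ) (hL : LowerUnitri L)
    {d : Fin p → ℝ} (hd : ∀ i, d i ≠ 0)
    (hA : ∀ i j, i ≠ j → ¬ G.Adj (σ.symm i) (σ.symm j) → (L * diagonal d * Lᵀ) i j = 0) :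
    memL G σ L := by
  refine hL.memL fun i j hji hadj => ?_
  induction j using WellFoundedLT.induction generalizing i with
  | ind j ih =>
    have hij := hA i j hji.ne' hadj
    rw [mul_apply, Finset.sum_eq_single j] at hij
    · simpa [hL.1 j, hd j] using hij
    · intro k _ hkj
      simp only [mul_diagonal, transpose_apply]
      rcases lt_or_gt_of_ne hkj with hk | hk
      · by_cases hik : G.Adj (σ.symm i) (σ.symm k)
        · have hjk : ¬ G.Adj (σ.symm j) (σ.symm k) := fun hjk => hadj (hpeo k j i hk hji hjk hik)
          rw [ih k hk j hk hjk, mul_zero]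
        · rw [ih k hk i (hk.trans hji) hik, zero_mul, zero_mul]
      · rw [hL.2 j k hk, mul_zero]
    · simp

theorem memL.inv (hnest : NestedElimScheme G σ) (hL : memL G σ L) : memL G σ L⁻¹ := by
  have hLu := hL.lowerUnitri
  have hLM : L * L⁻¹ = 1 := L.mul_nonsing_inv (by simp [hLu.det_eq_one])
  refine hLu.inv.memL fun i j hji hadj => ?_
  induction i using WellFoundedLT.induction with
  | ind i ih =>
    have hij := congr_fun (congr_fun hLM i) j
    rw [one_apply_ne hji.ne', mul_apply, Finset.sum_eq_single i] at hij
    · simpa [hLu.1 i] using hij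
    · intro k _ hki
      rcases lt_or_gt_of_ne hki with hk | hk
      · by_cases hik : G.Adj (σ.symm i) (σ.symm k)
        · rcases lt_trichotomy k j with hkj | rfl | hjk
          · rw [hLu.inv.2 k j hkj, mul_zero]
          · exact absurd hik hadj
          · -- an edge `j k` would close up with `k i` to the missing edge `j i`
            have hkj : ¬ G.Adj (σ.symm k) (σ.symm j) := fun hkj =>
              (hnest _ _ hik (by simpa using hk) (Or.inr hkj.symm)).elim
                (fun h => hji.ne (σ.symm.injective h)) (fun h => hadj h.symm)
            rw [ih k hk hjk hkj, mul_zero]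
        · rw [hL.2 i k hk.ne' (Or.inr hik), zero_mul]
      · rw [hLu.2 i k hk, zero_mul]
    · simp

end Triangular

theorem statement14_general {V : Type*} {p : ℕ} (G : SimpleGraph V) (σ : V ≃ Fin p)
    (hhom : Homogeneous G) (hσ : HasseElimScheme G σ)
    (C : Finset V) (hC : IsMaxClique G C)
    (A L D : Matrix (Fin p) (Fin p) ℝ)
    (hA : memP G σ A) (hL : LowerUnitri L) (hD : PosDiag D)
    (hdec : A = L * D * Lᵀ) :
    ∀ w : V, w ∉ C → ∀ u : V, u ∈ C → L⁻¹ (σ w) (σ u) = 0 := by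
  intro w hw u hu
  have hnest := hσ.nestedElimScheme hhom
  have hpattern : ∀ i j, i ≠ j → ¬ G.Adj (σ.symm i) (σ.symm j) →
      (L * diagonal D.diag * Lᵀ) i j = 0 := by
    rw [IsDiag.diagonal_diag fun i j h => hD.1 i j h, ← hdec]
    exact hA.2
  have hLinv : memL G σ L⁻¹ :=
    (memL_of_mul_diagonal_mul_transpose hnest.perfectElimScheme hL
      (fun i => (hD.2 i).ne') hpattern).inv hnest
  have hne : σ w ≠ σ u := σ.injective.ne (ne_of_mem_of_not_mem hu hw).symm
  refine hLinv.2 _ _ hne ((lt_or_gt_of_ne hne).imp_right fun hlt => ?_)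
  simpa using hnest.not_adj_of_isMaxClique hC hw hu hlt

/-- For a homogeneous graph with a Hasse tree based elimination scheme, a maximal
clique `C`, and `Σ ∈ P_{G_σ}` with Cholesky decomposition `Σ = LDLᵀ`, the entry
`(L⁻¹)_{σ(w) σ(u)}` vanishes whenever `w ∉ C` and `u ∈ C`. -/
theorem statement14 {V : Type*} [Fintype V] {p : ℕ} (G : SimpleGraph V) (σ : V ≃ Fin p)
    (hhom : Homogeneous G) (hσ : HasseElimScheme G σ)
    (C : Finset V) (hC : IsMaxClique G C)
    (A L D : Matrix (Fin p) (Fin p) ℝ)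
    (hA : memP G σ A) (hL : LowerUnitri L) (hD : PosDiag D)
    (hdec : A = L * D * Lᵀ) :
    ∀ w : V, w ∉ C → ∀ u : V, u ∈ C → L⁻¹ (σ w) (σ u) = 0 :=
  statement14_general G σ hhom hσ C hC A L D hA hL hD hdec
end
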